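/- For x, y ∈ I, n < ω and α < Λ: x R_n^{α+1} y if and only if there exists z ∈ I with x R_n z and z R_n^α y. -/

import Mathlib

open Ordinal

noncomputable def e1 (a : Ordinal) : Ordinal := omega0 ^ a - 1

noncomputable def eIter : ℕ → Ordinal → Ordinal
  | 0 => id
  | n + 1 => e1 ∘ eIter n

/-- Ordinal logarithm: exponent of the least term in the Cantor normal form. -/
noncomputable def ell (o : Ordinal) : Ordinal := (Ordinal.CNF omega0 o).getLast?.elim 0 Prod.fst

/-- Ignatiev (ℓ-)sequences. -/
def IsIgnatiev (x : ℕ → Ordinal) : Prop := ∀ i, x (i + 1) ≤ ell (x i)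

/-- The domain of Ignatiev's frame below Λ. -/
def Iset (Λ : Ordinal) : Set (ℕ → Ordinal) := {x | IsIgnatiev x ∧ ∀ i, x i < Λ}

/-- Finitely supported Ignatiev sequences below Λ. -/
def Hset (Λ : Ordinal) : Set (ℕ → Ordinal) := {x | x ∈ Iset Λ ∧ ∃ j, x j = 0}

/-- The accessibility relations. -/
def Rrel (n : ℕ) (x y : ℕ → Ordinal) : Prop :=
  (∀ m ≤ n, y m < x m) ∧ ∀ i, n < i → y i ≤ x i

/-- Transfinite iterates of the accessibility relation, with witnesses in `D`. -/
noncomputable def Iter (D : Set (ℕ → Ordinal)) (n : ℕ) :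
    Ordinal → (ℕ → Ordinal) → (ℕ → Ordinal) → Prop :=
  Ordinal.lt_wf.fix fun α rec x y =>
    if α = 0 then x = y
    else ∀ β, ∀ h : β < α, ∃ z ∈ D, Rrel n x z ∧ rec β h z y

inductive Formula : Type 1 where
  | top : Formula
  | and : Formula → Formula → Formula
  | dia : ℕ → Ordinal → Formula → Formula

def Formula.Bounded (Λ : Ordinal) : Formula → Prop
  | .top => True
  | .and φ ψ => φ.Bounded Λ ∧ ψ.Bounded Λ
  | .dia _ a φ => a < Λ ∧ φ.Bounded Λ

/-- Forcing over the frame with domain `D`. -/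
noncomputable def Forces (D : Set (ℕ → Ordinal)) : (ℕ → Ordinal) → Formula → Prop
  | _, .top => True
  | x, .and φ ψ => Forces D x φ ∧ Forces D x ψ
  | x, .dia n a φ => ∃ y ∈ D, Iter D n a x y ∧ Forces D y φ

/-- Monomial normal forms, coded as lists of (base, exponent) pairs. -/
def MNFc (Λ : Ordinal) (L : List (ℕ × Ordinal)) : Prop :=
  L.Chain' (fun p q => p.1 < q.1) ∧ (∀ p ∈ L, 0 < p.2 ∧ p.2 < Λ) ∧
    L.Chain' (fun p q => ∃ δ < Λ, p.2 = eIter (q.1 - p.1) q.2 * (2 + δ))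

/-- The formula coded by an MNF code. -/
def toFormula : List (ℕ × Ordinal) → Formula
  | [] => .top
  | p :: L => .and (.dia p.1 p.2 .top) (toFormula L)

/-- The projections π of an MNF, i.e. the translated Ignatiev sequence x_ψ. -/
noncomputable def proj : List (ℕ × Ordinal) → ℕ → Ordinal
  | [], _ => 0
  | (n, a) :: L, m => if m ≤ n then eIter (n - m) a else proj L m

lemma Rrel.trans {n : ℕ} {x y z : ℕ → Ordinal} (hxy : Rrel n x y) (hyz : Rrel n y z) :
    Rrel n x z :=
  ⟨fun m hm => (hyz.1 m hm).trans (hxy.1 m hm), fun i hi => (hyz.2 i hi).trans (hxy.2 i hi)⟩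

section Iter

variable {D : Set (ℕ → Ordinal)} {n : ℕ}

lemma Iter_iff_of_ne_zero {γ : Ordinal} (hγ : γ ≠ 0) {x y : ℕ → Ordinal} :
    Iter D n γ x y ↔ ∀ β < γ, ∃ z ∈ D, Rrel n x z ∧ Iter D n β z y := by
  rw [Iter, Ordinal.lt_wf.fix_eq, if_neg hγ]

lemma Iter.exists_step_of_lt {α β : Ordinal} {y z : ℕ → Ordinal} (hzy : Iter D n α z y)
    (hβ : β < α) : ∃ w ∈ D, Rrel n z w ∧ Iter D n β w y :=
  (Iter_iff_of_ne_zero hβ.ne_bot).1 hzy β hβ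

lemma Iter_succ_iff {α : Ordinal} {x y : ℕ → Ordinal} :
    Iter D n (α + 1) x y ↔ ∃ z ∈ D, Rrel n x z ∧ Iter D n α z y := by
  rw [Iter_iff_of_ne_zero (γ := α + 1) (Order.succ_ne_bot α)]
  refine ⟨fun h => h α (Order.lt_succ α), ?_⟩
  rintro ⟨z, hzD, hxz, hzy⟩ β hβ
  rcases (Order.lt_succ_iff.1 hβ).lt_or_eq with hβα | rfl
  · obtain ⟨w, hwD, hzw, hwy⟩ := hzy.exists_step_of_lt hβα
    exact ⟨w, hwD, hxz.trans hzw, hwy⟩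
  · exact ⟨z, hzD, hxz, hzy⟩

end Iter

theorem R_succ_iter_general (Λ : Ordinal) (n : ℕ) (α : Ordinal) (x y : ℕ → Ordinal) :
    Iter (Iset Λ) n (α + 1) x y ↔
      ∃ z ∈ Iset Λ, Rrel n x z ∧ Iter (Iset Λ) n α z y :=
  Iter_succ_iff

theorem R_succ_iter (Λ : Ordinal) (hpos : 0 < Λ) (heps : Ordinal.omega0 ^ Λ = Λ)
    (n : ℕ) (α : Ordinal) (hα : α < Λ) (x y : ℕ → Ordinal)
    (hx : x ∈ Iset Λ) (hy : y ∈ Iset Λ) :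
    Iter (Iset Λ) n (α + 1) x y ↔
      ∃ z ∈ Iset Λ, Rrel n x z ∧ Iter (Iset Λ) n α z y :=
  R_succ_iter_general Λ n α x y
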